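/- arXiv:cs/0207084 — 2 statements merged into one kernel-verified Lean document; each statement's English description precedes it below -/
import Mathlib

section
/- Let S = {φ_1,…,φ_n} and T be finite sets of propositional formulas, P = var(S ∪ T), and G = {g_1,…,g_n} fresh atoms; for S' ⊆ S let M_{S'} ⊆ G be the interpretation with g_i ∈ M_{S'} iff φ_i ∈ S'. Then S' is a maximal (with respect to set inclusion) subset of S such that T ∪ S' is consistent if and only if M_{S'} is a model of the QBF C[T,S] ∧ ⋀_{i=1}^n ( ¬g_i → ¬ C[T ∪ {φ_i}, S \ {φ_i}] ), where C[T,S] = ∃P (T ∧ (G ≤ S)). -/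
namespace Para

/-- Propositional formulas over an alphabet `α`. -/
inductive Fml (α : Type) : Type
  | atom : α → Fml α
  | top : Fml α
  | bot : Fml α
  | neg : Fml α → Fml α
  | conj : Fml α → Fml α → Fml α
  | disj : Fml α → Fml α → Fml α
  | impl : Fml α → Fml α → Fml α

namespace Fml

variable {α β : Type}

/-- Biconditional `a ≡ b`. -/
def iff' (a b : Fml α) : Fml α := conj (impl a b) (impl b a)

/-- Classical satisfaction: truth of a formula under an interpretation
(a set of atoms, those being true). -/
def holds (M : Set α) : Fml α → Prop
  | atom p => p ∈ M
  | top => True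
  | bot => False
  | neg φ => ¬ holds M φ
  | conj φ ψ => holds M φ ∧ holds M ψ
  | disj φ ψ => holds M φ ∨ holds M ψ
  | impl φ ψ => holds M φ → holds M ψ

/-- The set of atoms occurring in a formula. -/
def atoms : Fml α → Set α
  | atom p => {p}
  | top => ∅
  | bot => ∅
  | neg φ => atoms φ
  | conj φ ψ => atoms φ ∪ atoms ψ
  | disj φ ψ => atoms φ ∪ atoms ψ
  | impl φ ψ => atoms φ ∪ atoms ψ

/-- Renaming of atoms. -/
def map (f : α → β) : Fml α → Fml β
  | atom p => atom (f p)
  | top => top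
  | bot => bot
  | neg φ => neg (map f φ)
  | conj φ ψ => conj (map f φ) (map f ψ)
  | disj φ ψ => disj (map f φ) (map f ψ)
  | impl φ ψ => impl (map f φ) (map f ψ)

end Fml

/-- Classical consequence (= derivability, by soundness and completeness of
classical propositional logic). -/
def Entails {α : Type} (S : Set (Fml α)) (φ : Fml α) : Prop :=
  ∀ M : Set α, (∀ ψ ∈ S, ψ.holds M) → φ.holds M

/-- Deductive closure `Cn`. -/
def Cn {α : Type} (S : Set (Fml α)) : Set (Fml α) := {φ | Entails S φ}

/-- Consistency: `⊥ ∉ Cn S`. -/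
def Consistent {α : Type} (S : Set (Fml α)) : Prop := Fml.bot ∉ Cn S

/-- The atoms occurring in a set of formulas, `var(S)`. -/
def vars {α : Type} (S : Set (Fml α)) : Set α := ⋃ φ ∈ S, φ.atoms

/-- The alphabet `Σ ∪ Σ^±`: original atoms `p`, positive atoms `p⁺`,
negative atoms `p⁻`. -/
inductive XAtom (α : Type) : Type
  | orig : α → XAtom α
  | pos : α → XAtom α
  | neg : α → XAtom α

/-- Signed translation with a polarity flag (`true` = positive occurrence):
positive occurrences of `p` become `p⁺`, negative ones become `¬p⁻`. -/
def signedAux {α : Type} : Fml α → Bool → Fml (XAtom α)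
  | .atom p, true => .atom (.pos p)
  | .atom p, false => .neg (.atom (.neg p))
  | .top, _ => .top
  | .bot, _ => .bot
  | .neg φ, b => .neg (signedAux φ (!b))
  | .conj φ ψ, b => .conj (signedAux φ b) (signedAux ψ b)
  | .disj φ ψ, b => .disj (signedAux φ b) (signedAux ψ b)
  | .impl φ ψ, b => .impl (signedAux φ (!b)) (signedAux ψ b)

/-- The signed translation `α^±`. -/
def signed {α : Type} (φ : Fml α) : Fml (XAtom α) := signedAux φ true

/-- Embedding of `L_Σ` into `L_{Σ∪Σ^±}`. -/
def emb {α : Type} : Fml α → Fml (XAtom α) := Fml.map XAtom.orig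

/-- `W^± = {α^± | α ∈ W}`. -/
def signedSet {α : Type} (W : Set (Fml α)) : Set (Fml (XAtom α)) := signed '' W

/-- A default rule `(pre : jus / con)`. -/
structure Dflt (α : Type) where
  pre : Fml α
  jus : Fml α
  con : Fml α

/-- Atoms occurring in a default rule. -/
def Dflt.atoms {α : Type} (d : Dflt α) : Set α :=
  d.pre.atoms ∪ d.jus.atoms ∪ d.con.atoms

/-- The Reiter sequence `E_1 = V`, `E_{n+1} = Cn(E_n) ∪ {γ | (α:β/γ) ∈ D, α ∈ E_n, ¬β ∉ E}`
(0-indexed here). -/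
def extSeq {α : Type} (D : Set (Dflt α)) (V E : Set (Fml α)) : ℕ → Set (Fml α)
  | 0 => V
  | n+1 => Cn (extSeq D V E n) ∪
      {γ | ∃ d ∈ D, d.con = γ ∧ d.pre ∈ extSeq D V E n ∧ Fml.neg d.jus ∉ E}

/-- `E` is a (Reiter) extension of the default theory `(D, V)`. -/
def IsExtension {α : Type} (D : Set (Dflt α)) (V E : Set (Fml α)) : Prop :=
  E = ⋃ n, extSeq D V E n

/-- `E` is a hierarchic extension of `(⋃ n, Dn n, V)` with respect to the
partition `⟨Dn⟩`: `E = ⋃ En` where `E_0 = V` and `E_{n+1}` is an extension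
of `(Dn n, En n)`. -/
def IsHierExtension {α : Type} (Dn : ℕ → Set (Dflt α)) (V E : Set (Fml α)) : Prop :=
  ∃ En : ℕ → Set (Fml α), En 0 = V ∧ (∀ n, IsExtension (Dn n) (En n) (En (n+1))) ∧
    E = ⋃ n, En n

/-- The signed default `δ_p = ( : p⁺≡¬p⁻ / (p≡p⁺)∧(¬p≡p⁻) )`. -/
def deltap {α : Type} (p : α) : Dflt (XAtom α) where
  pre := .top
  jus := Fml.iff' (.atom (.pos p)) (.neg (.atom (.neg p)))
  con := .conj (Fml.iff' (.atom (.orig p)) (.atom (.pos p)))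
               (Fml.iff' (.neg (.atom (.orig p))) (.atom (.neg p)))

/-- `D_Σ = {δ_p | p ∈ Σ}`. -/
def DSigma (α : Type) : Set (Dflt (XAtom α)) := Set.range (deltap (α := α))

/-- `Π_S = {c(δ_p) | p ∈ Σ, ¬j(δ_p) ∉ S}`. -/
def PiSet {α : Type} (S : Set (Fml (XAtom α))) : Set (Fml (XAtom α)) :=
  {f | ∃ p : α, Fml.neg (deltap p).jus ∉ S ∧ f = (deltap p).con}

/-- The set of all extensions of `(D_Σ, W^±)`. -/
def Exts {α : Type} (W : Set (Fml α)) : Set (Set (Fml (XAtom α))) :=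
  {E | IsExtension (DSigma α) (signedSet W) E}

/-- Credulous unsigned consequence `W ⊢_c φ`. -/
def CredU {α : Type} (W : Set (Fml α)) (φ : Fml α) : Prop :=
  ∃ E ∈ Exts W, emb φ ∈ Cn (signedSet W ∪ PiSet E)

/-- Skeptical unsigned consequence `W ⊢_s φ`. -/
def SkepU {α : Type} (W : Set (Fml α)) (φ : Fml α) : Prop :=
  ∀ E ∈ Exts W, emb φ ∈ Cn (signedSet W ∪ PiSet E)

/-- Prudent unsigned consequence `W ⊢_p φ`. -/
def PrudU {α : Type} (W : Set (Fml α)) (φ : Fml α) : Prop :=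
  emb φ ∈ Cn (signedSet W ∪ ⋂ E ∈ Exts W, PiSet E)

/-- Credulous signed consequence `W ⊢_c^± φ`. -/
def CredS {α : Type} (W : Set (Fml α)) (φ : Fml α) : Prop :=
  ∃ E ∈ Exts W, signed φ ∈ Cn (signedSet W ∪ PiSet E)

/-- Skeptical signed consequence `W ⊢_s^± φ`. -/
def SkepS {α : Type} (W : Set (Fml α)) (φ : Fml α) : Prop :=
  ∀ E ∈ Exts W, signed φ ∈ Cn (signedSet W ∪ PiSet E)

/-- Prudent signed consequence `W ⊢_p^± φ`. -/
def PrudS {α : Type} (W : Set (Fml α)) (φ : Fml α) : Prop :=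
  signed φ ∈ Cn (signedSet W ∪ ⋂ E ∈ Exts W, PiSet E)

def Cc {α : Type} (W : Set (Fml α)) : Set (Fml α) := {φ | CredU W φ}
def Cs {α : Type} (W : Set (Fml α)) : Set (Fml α) := {φ | SkepU W φ}
def Cp {α : Type} (W : Set (Fml α)) : Set (Fml α) := {φ | PrudU W φ}
def CcPM {α : Type} (W : Set (Fml α)) : Set (Fml α) := {φ | CredS W φ}
def CsPM {α : Type} (W : Set (Fml α)) : Set (Fml α) := {φ | SkepS W φ}
def CpPM {α : Type} (W : Set (Fml α)) : Set (Fml α) := {φ | PrudS W φ}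

/-- `J'` is a maximal subset of `J` consistent with `V`. -/
def IsMaxConsSub {α : Type} (V J' J : Set (Fml α)) : Prop :=
  J' ⊆ J ∧ Consistent (V ∪ J') ∧
    ∀ J'', J' ⊆ J'' → J'' ⊆ J → Consistent (V ∪ J'') → J'' = J'

/-- Quantified Boolean formulas over an alphabet `α`. -/
inductive QBF (α : Type) : Type
  | atom : α → QBF α
  | top : QBF α
  | bot : QBF α
  | neg : QBF α → QBF α
  | conj : QBF α → QBF α → QBF α
  | disj : QBF α → QBF α → QBF α
  | impl : QBF α → QBF α → QBF α
  | all : α → QBF α → QBF α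
  | ex : α → QBF α → QBF α

/-- Truth of a QBF under an interpretation (a set of atoms):
`∀p Ψ` is true iff `Ψ` is true with `p` set to true and with `p` set to false,
dually for `∃p Ψ`. -/
def QBF.holds {α : Type} : Set α → QBF α → Prop
  | M, .atom p => p ∈ M
  | _, .top => True
  | _, .bot => False
  | M, .neg Φ => ¬ QBF.holds M Φ
  | M, .conj Φ Ψ => QBF.holds M Φ ∧ QBF.holds M Ψ
  | M, .disj Φ Ψ => QBF.holds M Φ ∨ QBF.holds M Ψ
  | M, .impl Φ Ψ => QBF.holds M Φ → QBF.holds M Ψ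
  | M, .all p Φ => QBF.holds (M ∪ {p}) Φ ∧ QBF.holds (M \ {p}) Φ
  | M, .ex p Φ => QBF.holds (M ∪ {p}) Φ ∨ QBF.holds (M \ {p}) Φ

/-- A QBF is valid iff it is true under every interpretation. -/
def QBF.Valid {α : Type} (Φ : QBF α) : Prop := ∀ M : Set α, Φ.holds M

/-- Propositional formulas are (quantifier-free) QBFs. -/
def Fml.toQBF {α : Type} : Fml α → QBF α
  | .atom p => .atom p
  | .top => .top
  | .bot => .bot
  | .neg φ => .neg φ.toQBF
  | .conj φ ψ => .conj φ.toQBF ψ.toQBF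
  | .disj φ ψ => .disj φ.toQBF ψ.toQBF
  | .impl φ ψ => .impl φ.toQBF ψ.toQBF

/-- Conjunction of a finite list of QBFs. -/
def QBF.conjList {α : Type} (l : List (QBF α)) : QBF α := l.foldr QBF.conj QBF.top

/-- `∃P Φ`: block of existential quantifiers over the atoms in `P`. -/
def QBF.exList {α : Type} (P : List α) (Φ : QBF α) : QBF α := P.foldr QBF.ex Φ

/-- `∀P Φ`: block of universal quantifiers over the atoms in `P`. -/
def QBF.allList {α : Type} (P : List α) (Φ : QBF α) : QBF α := P.foldr QBF.all Φ

/-- The module `C[T,S] = ∃P (T ∧ (G ≤ S))`, where `T` is given as the list `Ts`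
of its elements and the pairs `(g_i, φ_i)` encode `G ≤ S = ⋀ (g_i → φ_i)`. -/
def CMod {α : Type} (P : List α) (Ts : List (Fml α)) (pairs : List (α × Fml α)) : QBF α :=
  QBF.exList P (QBF.conj (QBF.conjList (Ts.map Fml.toQBF))
    (QBF.conjList (pairs.map (fun gp => QBF.impl (QBF.atom gp.1) gp.2.toQBF))))

/-- The module `Ext[T]` for a finite default theory `T = (D,V)` with
`D = {δ_1,…,δ_n}` and guessing atoms `g_1,…,g_n`:
`C[V, j(D)] ∧ ⋀_i (¬g_i → ¬ C[V ∪ {j(δ_i)}, j(D \ {δ_i})])`. -/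
def ExtMod {α : Type} {n : ℕ} (P : List α) (Vl : List (Fml α))
    (δ : Fin n → Dflt α) (g : Fin n → α) : QBF α :=
  QBF.conj
    (CMod P Vl ((List.finRange n).map fun i => (g i, (δ i).jus)))
    (QBF.conjList ((List.finRange n).map fun i =>
      QBF.impl (QBF.neg (QBF.atom (g i)))
        (QBF.neg (CMod P (Vl ++ [(δ i).jus])
          (((List.finRange n).filter (fun j => j != i)).map fun j => (g j, (δ j).jus))))))

/-- The module `Conseq[T,φ] = ∀P' (V ∧ (G ≤ c(D)) → φ)`. -/
def ConseqMod {α : Type} {n : ℕ} (P' : List α) (Vl : List (Fml α))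
    (δ : Fin n → Dflt α) (g : Fin n → α) (φ : Fml α) : QBF α :=
  QBF.allList P'
    (QBF.impl
      (QBF.conj (QBF.conjList (Vl.map Fml.toQBF))
        (QBF.conjList ((List.finRange n).map fun i =>
          QBF.impl (QBF.atom (g i)) (δ i).con.toQBF)))
      φ.toQBF)

/-! Because the guessing atoms are fresh and every atom of `T` and `S` is quantified, `C[T, S]`
holds in `M` exactly when `T` together with the `φ_i` whose `g_i` is true in `M` is satisfiable.
In `M_{S'}` the first conjunct therefore says that `T ∪ S'` is consistent, and the `i`-th one,
for `φ_i ∉ S'`, that `T ∪ S' ∪ {φ_i}` is not (for `φ_i ∈ S'` it is vacuous). As consistency is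
inherited by subsets, these one-formula extensions already witness maximality. -/

section Semantics

variable {α : Type}

theorem Fml.holds_congr (φ : Fml α) {M N : Set α} (h : ∀ a ∈ φ.atoms, a ∈ M ↔ a ∈ N) :
    φ.holds M ↔ φ.holds N := by
  induction φ with
  | atom p => exact h p rfl
  | top | bot => rfl
  | neg φ ih => exact not_congr (ih h)
  | conj φ ψ ihφ ihψ | disj φ ψ ihφ ihψ | impl φ ψ ihφ ihψ =>
    have hφ := ihφ fun a ha => h a (Or.inl ha)
    have hψ := ihψ fun a ha => h a (Or.inr ha)
    simp only [Fml.holds, hφ, hψ]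

theorem QBF.holds_toQBF (φ : Fml α) (M : Set α) : QBF.holds M φ.toQBF ↔ φ.holds M := by
  induction φ <;> simp_all only [Fml.toQBF, QBF.holds, Fml.holds]

theorem QBF.holds_conjList (l : List (QBF α)) (M : Set α) :
    QBF.holds M (QBF.conjList l) ↔ ∀ Φ ∈ l, QBF.holds M Φ := by
  induction l with
  | nil => simp [QBF.conjList, QBF.holds]
  | cons Φ l ih => simp [QBF.conjList, QBF.holds, ← ih]

theorem QBF.holds_exList (P : List α) (Φ : QBF α) (M : Set α) :
    QBF.holds M (QBF.exList P Φ) ↔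
      ∃ N : Set α, (∀ a ∉ P, a ∈ N ↔ a ∈ M) ∧ QBF.holds N Φ := by
  induction P generalizing M with
  | nil =>
    refine ⟨fun h => ⟨M, fun _ _ => Iff.rfl, h⟩, fun ⟨N, hN, h⟩ => ?_⟩
    rwa [← Set.ext fun a => hN a List.not_mem_nil]
  | cons p P ih =>
    change QBF.holds (M ∪ {p}) (QBF.exList P Φ) ∨ QBF.holds (M \ {p}) (QBF.exList P Φ) ↔ _
    rw [ih, ih]
    constructor
    · rintro (⟨N, hN, h⟩ | ⟨N, hN, h⟩) <;>
        exact ⟨N, fun a ha => by simp_all [not_or], h⟩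
    · rintro ⟨N, hN, h⟩
      by_cases hp : p ∈ N
      · left; refine ⟨N, fun a ha => ?_, h⟩; by_cases a = p <;> simp_all
      · right; refine ⟨N, fun a ha => ?_, h⟩; by_cases a = p <;> simp_all

theorem consistent_iff_exists_model (S : Set (Fml α)) :
    Consistent S ↔ ∃ M : Set α, ∀ ψ ∈ S, ψ.holds M := by
  simp only [Consistent, Cn, Entails, Set.mem_ofPred_eq, Fml.holds, not_forall, exists_prop,
    not_false_eq_true, and_true]

theorem Consistent.subset {A B : Set (Fml α)} (hB : Consistent B) (h : A ⊆ B) : Consistent A := by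
  rw [consistent_iff_exists_model] at *
  obtain ⟨M, hM⟩ := hB
  exact ⟨M, fun ψ hψ => hM ψ (h hψ)⟩

theorem maximal_consistent_iff_insert_inconsistent {V J S' : Set (Fml α)} (hS' : S' ⊆ J) :
    (∀ S'', S' ⊆ S'' → S'' ⊆ J → Consistent (V ∪ S'') → S'' = S') ↔
      ∀ ψ ∈ J, ψ ∉ S' → ¬ Consistent (V ∪ insert ψ S') := by
  constructor
  · intro hmax ψ hψ hψS' hcons
    have hins := hmax _ (Set.subset_insert ψ S') (Set.insert_subset hψ hS') hcons
    exact hψS' (hins ▸ Set.mem_insert ψ S')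
  · intro hins S'' hle hsub hcons
    by_contra hne
    obtain ⟨ψ, hψS'', hψS'⟩ := Set.exists_of_ssubset (hle.ssubset_of_ne (Ne.symm hne))
    exact hins ψ (hsub hψS'') hψS'
      (hcons.subset (Set.union_subset_union_right V (Set.insert_subset hψS'' hle)))

/-- For `pairs` encoding `G ≤ S`, the part of `S` that `M` switches on. -/
def selected (pairs : List (α × Fml α)) (M : Set α) : Set (Fml α) :=
  {ψ | ∃ a ∈ M, (a, ψ) ∈ pairs}

theorem selected_map_eq {ι : Type} {g : ι → α} {φ : ι → Fml α} {S' : Set (Fml α)}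
    (hg : Function.Injective g) (hS' : S' ⊆ Set.range φ) {l : List ι}
    (hl : ∀ j, φ j ∈ S' → j ∈ l) :
    selected (l.map fun j => (g j, φ j)) (g '' (φ ⁻¹' S')) = S' := by
  ext ψ
  simp only [selected, Set.mem_ofPred_eq, List.mem_map, Prod.mk.injEq]
  constructor
  · rintro ⟨_, hgj, j, -, rfl, rfl⟩
    exact hg.mem_set_image.1 hgj
  · intro hψ
    obtain ⟨j, rfl⟩ := hS' hψ
    exact ⟨g j, Set.mem_image_of_mem g hψ, j, hl j hψ, rfl, rfl⟩

theorem holds_CMod_iff {P : List α} {Ts : List (Fml α)} {pairs : List (α × Fml α)} {M : Set α}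
    (hTs : ∀ ψ ∈ Ts, ∀ a ∈ ψ.atoms, a ∈ P)
    (hpairs : ∀ gp ∈ pairs, gp.1 ∉ P ∧ ∀ a ∈ gp.2.atoms, a ∈ P) :
    QBF.holds M (CMod P Ts pairs) ↔ Consistent ({ψ | ψ ∈ Ts} ∪ selected pairs M) := by
  rw [CMod, QBF.holds_exList, consistent_iff_exists_model]
  simp only [QBF.holds, QBF.holds_conjList, List.forall_mem_map, QBF.holds_toQBF]
  constructor
  · rintro ⟨N, hN, hTsN, hpairsN⟩
    refine ⟨N, ?_⟩
    rintro ψ (hψ | ⟨a, ha, hmem⟩)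
    · exact hTsN ψ hψ
    · exact hpairsN (a, ψ) hmem ((hN a (hpairs _ hmem).1).2 ha)
  · rintro ⟨N, hN⟩
    let N' : Set α := {a | a ∈ P ∧ a ∈ N ∨ a ∉ P ∧ a ∈ M}
    have hN' {ψ : Fml α} (hψ : ∀ a ∈ ψ.atoms, a ∈ P) : ψ.holds N' ↔ ψ.holds N :=
      ψ.holds_congr fun a ha => by simp [N', hψ a ha]
    refine ⟨N', fun a ha => by simp [N', ha], fun ψ hψ => ?_, fun gp hgp hg => ?_⟩
    · exact (hN' (hTs ψ hψ)).2 (hN ψ (Or.inl hψ))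
    · have hgM : gp.1 ∈ M := by simpa [N', (hpairs gp hgp).1] using hg
      exact (hN' (hpairs gp hgp).2).2 (hN gp.2 (Or.inr ⟨gp.1, hgM, hgp⟩))

end Semantics

/-- In the setting of Proposition `C[T,S]`: `S'` is a maximal
subset of `S` such that `T ∪ S'` is consistent iff `M_{S'}` is a model of
`C[T,S] ∧ ⋀_{i=1}^n (¬g_i → ¬ C[T ∪ {φ_i}, S \ {φ_i}])`. -/
theorem maximal_consistency_QBF_encoding {α : Type} {n : ℕ} (φ : Fin n → Fml α)
    (Tl : List (Fml α)) (g : Fin n → α) (hginj : Function.Injective g)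
    (hfresh : ∀ i, g i ∉ vars (Set.range φ ∪ {ψ | ψ ∈ Tl}))
    (P : List α) (hP : ∀ a, a ∈ P ↔ a ∈ vars (Set.range φ ∪ {ψ | ψ ∈ Tl}))
    (S' : Set (Fml α)) (hS' : S' ⊆ Set.range φ) :
    (Consistent ({ψ | ψ ∈ Tl} ∪ S') ∧
      ∀ S'' : Set (Fml α), S' ⊆ S'' → S'' ⊆ Set.range φ →
        Consistent ({ψ | ψ ∈ Tl} ∪ S'') → S'' = S') ↔
      QBF.holds {a | ∃ i, φ i ∈ S' ∧ g i = a}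
        (QBF.conj
          (CMod P Tl ((List.finRange n).map (fun i => (g i, φ i))))
          (QBF.conjList ((List.finRange n).map (fun i =>
            QBF.impl (QBF.neg (QBF.atom (g i)))
              (QBF.neg (CMod P (Tl ++ [φ i])
                (((List.finRange n).filter (fun j => j != i)).map
                  (fun j => (g j, φ j))))))))) := by
  have hφ (i : Fin n) : ∀ a ∈ (φ i).atoms, a ∈ P :=
    fun a ha => (hP a).2 (Set.mem_biUnion (Or.inl ⟨i, rfl⟩) ha)
  have hTl : ∀ ψ ∈ Tl, ∀ a ∈ ψ.atoms, a ∈ P :=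
    fun ψ hψ a ha => (hP a).2 (Set.mem_biUnion (Or.inr hψ) ha)
  have hpairs (l : List (Fin n)) :
      ∀ gp ∈ l.map (fun j => (g j, φ j)), gp.1 ∉ P ∧ ∀ a ∈ gp.2.atoms, a ∈ P :=
    List.forall_mem_map.2 fun j _ => ⟨fun hj => hfresh j ((hP _).1 hj), hφ j⟩
  show _ ↔ QBF.holds (g '' (φ ⁻¹' S')) _
  rw [maximal_consistent_iff_insert_inconsistent hS', Set.forall_mem_range]
  simp only [QBF.holds, QBF.holds_conjList, List.forall_mem_map, List.mem_finRange, true_implies,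
    hginj.mem_set_image, Set.mem_preimage]
  refine and_congr ?_ (forall_congr' fun i => imp_congr_right fun hi => not_congr ?_)
  · rw [holds_CMod_iff hTl (hpairs _), selected_map_eq hginj hS' fun j _ => List.mem_finRange j]
  · have hl (j : Fin n) (hj : φ j ∈ S') : j ∈ (List.finRange n).filter (· != i) := by
      simpa using fun hji : j = i => hi (hji ▸ hj)
    rw [holds_CMod_iff (List.forall_mem_append.2 ⟨hTl, List.forall_mem_singleton.2 (hφ i)⟩)
      (hpairs _), selected_map_eq hginj hS' hl]
    have hT : {ψ | ψ ∈ Tl ++ [φ i]} ∪ S' = {ψ | ψ ∈ Tl} ∪ insert (φ i) S' := by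
      ext; simp [or_assoc, or_left_comm]
    rw [hT]

end Para
end

section
/- Let W ⊆ L_Σ be a finite set of propositional formulas. If W is classically consistent, i.e., Cn(W) ≠ L_Σ, then all paraconsistent consequence operators coincide with classical consequence: Cn(W) = C_i(W) = C_i^±(W) for each i ∈ {p, s, c}. -/
namespace Para

/-! ### Auxiliary development -/

section AuxCollapse

variable {α : Type}

lemma Cn.subset {S : Set (Fml α)} : S ⊆ Cn S := fun φ hφ M hM => hM φ hφ

lemma Cn.mono {S T : Set (Fml α)} (h : S ⊆ T) : Cn S ⊆ Cn T :=
  fun _ hφ M hM => hφ M (fun ψ hψ => hM ψ (h hψ))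

lemma Cn.idem {S : Set (Fml α)} : Cn (Cn S) ⊆ Cn S :=
  fun _ hφ M hM => hφ M (fun ψ hψ => hψ M hM)

lemma Fml.holds_map {β : Type} (f : α → β) (M : Set β) :
    ∀ φ : Fml α, (φ.map f).holds M ↔ φ.holds (f ⁻¹' M) := by
  intro φ
  induction φ <;> simp [Fml.map, Fml.holds, *] <;> rfl

lemma holds_signedAux {M : Set (XAtom α)} {M₀ : Set α}
    (hpos : ∀ p, XAtom.pos p ∈ M ↔ p ∈ M₀)
    (hneg : ∀ p, XAtom.neg p ∈ M ↔ p ∉ M₀) :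
    ∀ (φ : Fml α) (b : Bool), (signedAux φ b).holds M ↔ φ.holds M₀ := by
  intro φ
  induction φ with
  | atom p => intro b; cases b <;> simp [signedAux, Fml.holds, hpos p, hneg p]
  | top => intro b; simp [signedAux, Fml.holds]
  | bot => intro b; simp [signedAux, Fml.holds]
  | neg φ ih => intro b; simp [signedAux, Fml.holds, ih]
  | conj φ ψ ih1 ih2 => intro b; simp [signedAux, Fml.holds, ih1, ih2]
  | disj φ ψ ih1 ih2 => intro b; simp [signedAux, Fml.holds, ih1, ih2]
  | impl φ ψ ih1 ih2 => intro b; simp [signedAux, Fml.holds, ih1, ih2]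

/-- The canonical coherent lift of an interpretation. -/
def liftM (M₀ : Set α) : Set (XAtom α) :=
  {x | match x with
    | .orig p => p ∈ M₀
    | .pos p => p ∈ M₀
    | .neg p => p ∉ M₀}

@[simp] lemma mem_liftM_orig (M₀ : Set α) (p : α) :
    XAtom.orig p ∈ liftM M₀ ↔ p ∈ M₀ := Iff.rfl
@[simp] lemma mem_liftM_pos (M₀ : Set α) (p : α) :
    XAtom.pos p ∈ liftM M₀ ↔ p ∈ M₀ := Iff.rfl
@[simp] lemma mem_liftM_neg (M₀ : Set α) (p : α) :
    XAtom.neg p ∈ liftM M₀ ↔ p ∉ M₀ := Iff.rfl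

lemma holds_signed_liftM (M₀ : Set α) (φ : Fml α) :
    (signed φ).holds (liftM M₀) ↔ φ.holds M₀ :=
  holds_signedAux (fun p => Iff.rfl) (fun p => Iff.rfl) φ true

lemma holds_emb_liftM (M₀ : Set α) (φ : Fml α) :
    (emb φ).holds (liftM M₀) ↔ φ.holds M₀ := by
  rw [emb, Fml.holds_map]
  have : (XAtom.orig ⁻¹' liftM M₀ : Set α) = M₀ := rfl
  rw [this]

lemma liftM_holds_con (M₀ : Set α) (p : α) : (deltap p).con.holds (liftM M₀) := by
  by_cases h : p ∈ M₀ <;> simp [deltap, Fml.iff', Fml.holds, h]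

lemma liftM_holds_jus (M₀ : Set α) (p : α) : (deltap p).jus.holds (liftM M₀) := by
  by_cases h : p ∈ M₀ <;> simp [deltap, Fml.iff', Fml.holds, h]

/-- `Π_all`: the set of all consequents of the signed defaults. -/
def PiAll (α : Type) : Set (Fml (XAtom α)) := Set.range fun p : α => (deltap p).con

lemma liftM_models (M₀ : Set α) {W : Set (Fml α)} (hM₀ : ∀ ψ ∈ W, ψ.holds M₀) :
    ∀ ψ ∈ signedSet W ∪ PiAll α, ψ.holds (liftM M₀) := by
  rintro ψ (⟨φ, hφ, rfl⟩ | ⟨p, rfl⟩)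
  · exact (holds_signed_liftM M₀ φ).2 (hM₀ φ hφ)
  · exact liftM_holds_con M₀ p

lemma negjus_not_mem {W : Set (Fml α)} {M₀ : Set α} (hM₀ : ∀ ψ ∈ W, ψ.holds M₀)
    (p : α) : Fml.neg (deltap p).jus ∉ Cn (signedSet W ∪ PiAll α) := by
  intro h
  exact h (liftM M₀) (liftM_models M₀ hM₀) (liftM_holds_jus M₀ p)

lemma extSeq_subset_E0 {W : Set (Fml α)} (E : Set (Fml (XAtom α))) :
    ∀ n, extSeq (DSigma α) (signedSet W) E n ⊆ Cn (signedSet W ∪ PiAll α) := by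
  intro n
  induction n with
  | zero => exact Set.Subset.trans Set.subset_union_left Cn.subset
  | succ n ih =>
    rintro φ (h | ⟨d, ⟨p, rfl⟩, rfl, _, _⟩)
    · exact Cn.idem (Cn.mono ih h)
    · exact Cn.subset (Set.mem_union_right _ ⟨p, rfl⟩)

lemma E0_isExtension {W : Set (Fml α)} {M₀ : Set α} (hM₀ : ∀ ψ ∈ W, ψ.holds M₀) :
    IsExtension (DSigma α) (signedSet W) (Cn (signedSet W ∪ PiAll α)) := by
  set E₀ := Cn (signedSet W ∪ PiAll α) with hE₀
  apply Set.Subset.antisymm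
  · -- E₀ ⊆ ⋃ n, extSeq
    have h2 : signedSet W ∪ PiAll α ⊆ extSeq (DSigma α) (signedSet W) E₀ 2 := by
      rintro φ (h | ⟨p, rfl⟩)
      · exact Or.inl (Cn.subset (Or.inl (Cn.subset h)))
      · refine Or.inr ⟨deltap p, ⟨p, rfl⟩, rfl, ?_, negjus_not_mem hM₀ p⟩
        exact Or.inl (fun M _ => trivial)
    intro φ hφ
    exact Set.mem_iUnion.2 ⟨3, Or.inl (Cn.mono h2 hφ)⟩
  · exact Set.iUnion_subset (extSeq_subset_E0 E₀)

lemma ext_subset_E0 {W : Set (Fml α)} {E : Set (Fml (XAtom α))}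
    (hE : IsExtension (DSigma α) (signedSet W) E) :
    E ⊆ Cn (signedSet W ∪ PiAll α) := by
  rw [hE]
  exact Set.iUnion_subset (extSeq_subset_E0 E)

lemma PiSet_eq_PiAll {W : Set (Fml α)} {M₀ : Set α} (hM₀ : ∀ ψ ∈ W, ψ.holds M₀)
    {E : Set (Fml (XAtom α))} (hE : E ∈ Exts W) : PiSet E = PiAll α := by
  have hsub := ext_subset_E0 hE
  ext f
  constructor
  · rintro ⟨p, -, rfl⟩; exact ⟨p, rfl⟩
  · rintro ⟨p, rfl⟩
    exact ⟨p, fun h => negjus_not_mem hM₀ p (hsub h), rfl⟩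

lemma con_extract {M : Set (XAtom α)} {p : α} (h : (deltap p).con.holds M) :
    (XAtom.pos p ∈ M ↔ XAtom.orig p ∈ M) ∧ (XAtom.neg p ∈ M ↔ XAtom.orig p ∉ M) := by
  simp only [deltap, Fml.iff', Fml.holds] at h
  constructor
  · constructor
    · exact h.1.2
    · exact h.1.1
  · constructor
    · exact h.2.2
    · exact h.2.1

lemma emb_mem_Cn_iff {W : Set (Fml α)} (φ : Fml α) :
    emb φ ∈ Cn (signedSet W ∪ PiAll α) ↔ Entails W φ := by
  constructor
  · intro h M₀ hM₀
    have := h (liftM M₀) (liftM_models M₀ hM₀)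
    exact (holds_emb_liftM M₀ φ).1 this
  · intro h M hM
    set M₀ : Set α := XAtom.orig ⁻¹' M with hM₀def
    have hcon : ∀ p : α, (deltap p).con.holds M := fun p =>
      hM _ (Set.mem_union_right _ ⟨p, rfl⟩)
    have hpos : ∀ p, XAtom.pos p ∈ M ↔ p ∈ M₀ := fun p => (con_extract (hcon p)).1
    have hneg : ∀ p, XAtom.neg p ∈ M ↔ p ∉ M₀ := fun p => (con_extract (hcon p)).2
    have hW₀ : ∀ ψ ∈ W, ψ.holds M₀ := by
      intro ψ hψ
      have := hM (signed ψ) (Set.mem_union_left _ ⟨ψ, hψ, rfl⟩)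
      exact (holds_signedAux hpos hneg ψ true).1 this
    rw [emb, Fml.holds_map]
    exact h M₀ hW₀

lemma signed_mem_Cn_iff {W : Set (Fml α)} (φ : Fml α) :
    signed φ ∈ Cn (signedSet W ∪ PiAll α) ↔ Entails W φ := by
  constructor
  · intro h M₀ hM₀
    have := h (liftM M₀) (liftM_models M₀ hM₀)
    exact (holds_signed_liftM M₀ φ).1 this
  · intro h M hM
    set M₀ : Set α := XAtom.orig ⁻¹' M with hM₀def
    have hcon : ∀ p : α, (deltap p).con.holds M := fun p =>
      hM _ (Set.mem_union_right _ ⟨p, rfl⟩)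
    have hpos : ∀ p, XAtom.pos p ∈ M ↔ p ∈ M₀ := fun p => (con_extract (hcon p)).1
    have hneg : ∀ p, XAtom.neg p ∈ M ↔ p ∉ M₀ := fun p => (con_extract (hcon p)).2
    have hW₀ : ∀ ψ ∈ W, ψ.holds M₀ := by
      intro ψ hψ
      have := hM (signed ψ) (Set.mem_union_left _ ⟨ψ, hψ, rfl⟩)
      exact (holds_signedAux hpos hneg ψ true).1 this
    exact (holds_signedAux hpos hneg φ true).2 (h M₀ hW₀)

end AuxCollapse

/-- If the finite set `W ⊆ L_Σ` is classically consistent,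
i.e. `Cn(W) ≠ L_Σ`, then `Cn(W) = C_i(W) = C_i^±(W)` for each `i ∈ {p,s,c}`. -/
theorem consistent_case_collapse {α : Type} (W : Set (Fml α)) (hW : W.Finite)
    (hcons : Cn W ≠ Set.univ) :
    Cn W = Cp W ∧ Cn W = Cs W ∧ Cn W = Cc W ∧
    Cn W = CpPM W ∧ Cn W = CsPM W ∧ Cn W = CcPM W := by
  have hmodel : ∃ M₀ : Set α, ∀ ψ ∈ W, ψ.holds M₀ := by
    by_contra h
    push_neg at h
    apply hcons
    ext φ
    simp only [Set.mem_univ, iff_true]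
    intro M hM
    obtain ⟨ψ, hψ, hψ'⟩ := h M
    exact absurd (hM ψ hψ) hψ'
  obtain ⟨M₀, hM₀⟩ := hmodel
  have hExt : Cn (signedSet W ∪ PiAll α) ∈ Exts W := E0_isExtension hM₀
  have hPi : ∀ E ∈ Exts W, PiSet E = PiAll α := fun E hE => PiSet_eq_PiAll hM₀ hE
  have hInter : (⋂ E ∈ Exts W, PiSet E) = PiAll α := by
    apply Set.Subset.antisymm
    · exact (Set.biInter_subset_of_mem hExt).trans (hPi _ hExt).subset
    · intro x hx
      exact Set.mem_biInter fun E hE => (hPi E hE).symm ▸ hx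
  refine ⟨?_, ?_, ?_, ?_, ?_, ?_⟩
  · ext φ
    simp only [Cn, Cp, PrudU, Set.mem_setOf_eq, hInter]
    exact (emb_mem_Cn_iff φ).symm
  · ext φ
    simp only [Cn, Cs, SkepU, Set.mem_setOf_eq]
    constructor
    · intro h E hE
      rw [hPi E hE]
      exact (emb_mem_Cn_iff φ).2 h
    · intro h
      have h' := h _ hExt
      rw [hPi _ hExt] at h'
      exact (emb_mem_Cn_iff φ).1 h'
  · ext φ
    simp only [Cn, Cc, CredU, Set.mem_setOf_eq]
    constructor
    · intro h
      exact ⟨_, hExt, by rw [hPi _ hExt]; exact (emb_mem_Cn_iff φ).2 h⟩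
    · rintro ⟨E, hE, h⟩
      rw [hPi E hE] at h
      exact (emb_mem_Cn_iff φ).1 h
  · ext φ
    simp only [Cn, CpPM, PrudS, Set.mem_setOf_eq, hInter]
    exact (signed_mem_Cn_iff φ).symm
  · ext φ
    simp only [Cn, CsPM, SkepS, Set.mem_setOf_eq]
    constructor
    · intro h E hE
      rw [hPi E hE]
      exact (signed_mem_Cn_iff φ).2 h
    · intro h
      have h' := h _ hExt
      rw [hPi _ hExt] at h'
      exact (signed_mem_Cn_iff φ).1 h'
  · ext φ
    simp only [Cn, CcPM, CredS, Set.mem_setOf_eq]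
    constructor
    · intro h
      exact ⟨_, hExt, by rw [hPi _ hExt]; exact (signed_mem_Cn_iff φ).2 h⟩
    · rintro ⟨E, hE, h⟩
      rw [hPi E hE] at h
      exact (signed_mem_Cn_iff φ).1 h


end Para
end
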